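/- Let G be a connected graph of order n ≥ 2 and let H_1, ..., H_n be connected bipartite graphs with chosen roots v_i ∈ V(H_i). The rooted product graph obtained by identifying the root of H_i with the i-th vertex of G satisfies dim_l(G∘𝓗) = dim_l(G). -/

import Mathlib

open SimpleGraph

/-- A set `S` is a local metric generator for `G` if every pair of adjacent
vertices is distinguished, by distance, by some element of `S`. -/
def IsLocalMetricGenerator {V : Type*} (G : SimpleGraph V) (S : Set V) : Prop :=
  ∀ ⦃u v : V⦄, G.Adj u v → ∃ w ∈ S, G.dist u w ≠ G.dist v w

/-- The local metric dimension of a graph. -/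
noncomputable def localMetricDim {V : Type*} [Fintype V] (G : SimpleGraph V) : ℕ :=
  sInf {k | ∃ S : Finset V, IsLocalMetricGenerator G ↑S ∧ S.card = k}

/-- A local metric basis: a local metric generator of minimum cardinality. -/
def IsLocalMetricBasis {V : Type*} [Fintype V] (G : SimpleGraph V) (S : Finset V) : Prop :=
  IsLocalMetricGenerator G ↑S ∧ S.card = localMetricDim G

/-- The rooted product of G with a family of rooted graphs (Hᵢ, rᵢ), one for
each vertex i of G: the root of Hᵢ is identified with the vertex i of G. -/
def rootedProdFamily {ι : Type*} {W : ι → Type*} (G : SimpleGraph ι)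
    (H : ∀ i, SimpleGraph (W i)) (r : ∀ i, W i) : SimpleGraph (Σ i, W i) :=
  SimpleGraph.fromRel (fun a b =>
    (∃ h : a.1 = b.1, (H b.1).Adj (h ▸ a.2) b.2) ∨
    (a.2 = r a.1 ∧ b.2 = r b.1 ∧ G.Adj a.1 b.1))

/-! The distance from `(i, a)` to the root of `Hₖ` splits as `d_{Hᵢ}(a, rᵢ) + d_G(i, k)`.
Hence a local metric generator of `G`, placed on the roots, still resolves the edges between
roots, and any root resolves an edge `ab` of some `Hⱼ`: in a connected bipartite graph adjacent
vertices lie at distances of different parity from `rⱼ`. Conversely, the first coordinates of a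
local metric generator of the rooted product resolve every edge of `G`, viewed as an edge
between roots. A connected `G` with two vertices has an edge, so its local metric generators are
nonempty. -/

namespace SimpleGraph

variable {V : Type*} {G : SimpleGraph V} {u v w : V}

lemma Adj.dist_le_dist_add_one (h : G.Adj u v) (w : V) : G.dist u w ≤ G.dist v w + 1 := by
  have := h.reachable.dist_triangle_left w
  rw [dist_eq_one_iff_adj.mpr h] at this
  omega

lemma Walk.le_length_add_of_adj_le {f : V → ℕ} (hf : ∀ ⦃x y⦄, G.Adj x y → f x ≤ f y + 1)
    (p : G.Walk u v) : f u ≤ p.length + f v := by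
  induction p with
  | nil => simp
  | cons h _ ih => have := hf h; simp only [Walk.length_cons]; omega

lemma Reachable.le_dist_add_of_adj_le {f : V → ℕ} (hf : ∀ ⦃x y⦄, G.Adj x y → f x ≤ f y + 1)
    (h : G.Reachable u v) : f u ≤ G.dist u v + f v := by
  obtain ⟨p, hp⟩ := h.exists_walk_length_eq_dist
  exact hp ▸ p.le_length_add_of_adj_le hf

lemma Colorable.dist_ne_dist_of_adj (hG : G.Colorable 2) (huv : G.Adj u v)
    (hw : G.Reachable u w) :
    G.dist u w ≠ G.dist v w := by
  obtain ⟨p, hp⟩ := hw.exists_walk_length_eq_dist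
  obtain ⟨q, hq⟩ := (huv.symm.reachable.trans hw).exists_walk_length_eq_dist
  have := two_colorable_iff_forall_loop_even.mp hG u (p.append (q.reverse.concat huv.symm))
  intro h
  simp only [Walk.length_append, Walk.length_concat, Walk.length_reverse, hp, hq, h] at this
  exact Nat.not_even_two_mul_add_one _ (by rwa [two_mul])

end SimpleGraph

section LocalMetricDim

variable {V : Type*} {G : SimpleGraph V}

lemma isLocalMetricGenerator_univ : IsLocalMetricGenerator G Set.univ := fun u _ huv =>
  ⟨u, trivial, by rw [SimpleGraph.dist_self, dist_eq_one_iff_adj.mpr huv.symm]; exact zero_ne_one⟩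

lemma IsLocalMetricGenerator.nonempty {S : Set V} (hS : IsLocalMetricGenerator G S) {u v : V}
    (huv : G.Adj u v) : S.Nonempty :=
  let ⟨w, hw, _⟩ := hS huv
  ⟨w, hw⟩

variable [Fintype V]

lemma localMetricDim_le_card {S : Finset V} (hS : IsLocalMetricGenerator G S) :
    localMetricDim G ≤ S.card :=
  Nat.sInf_le ⟨S, hS, rfl⟩

variable (G) in
lemma exists_isLocalMetricBasis : ∃ S, IsLocalMetricBasis G S :=
  Nat.sInf_mem (s := {k | ∃ S : Finset V, IsLocalMetricGenerator G ↑S ∧ S.card = k})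
    ⟨_, Finset.univ, by simpa using isLocalMetricGenerator_univ, rfl⟩

end LocalMetricDim

namespace rootedProdFamily

variable {ι : Type*} {W : ι → Type*} {G : SimpleGraph ι} {H : ∀ i, SimpleGraph (W i)}
  {r : ∀ i, W i}

lemma adj_fiber {j : ι} {a b : W j} (h : (H j).Adj a b) :
    (rootedProdFamily G H r).Adj ⟨j, a⟩ ⟨j, b⟩ :=
  ⟨fun he => h.ne (by simpa using he), Or.inl (Or.inl ⟨rfl, h⟩)⟩

lemma adj_root {i j : ι} (h : G.Adj i j) :
    (rootedProdFamily G H r).Adj ⟨i, r i⟩ ⟨j, r j⟩ :=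
  ⟨fun he => h.ne (congrArg Sigma.fst he), Or.inl (Or.inr ⟨rfl, rfl, h⟩)⟩

lemma adj_cases {x y : Σ i, W i} (h : (rootedProdFamily G H r).Adj x y) :
    (∃ (j : ι) (a b : W j), x = ⟨j, a⟩ ∧ y = ⟨j, b⟩ ∧ (H j).Adj a b) ∨
      (x.2 = r x.1 ∧ y.2 = r y.1 ∧ G.Adj x.1 y.1) := by
  obtain ⟨j, a⟩ := x
  obtain ⟨j', b⟩ := y
  obtain ⟨-, (⟨hj, hab⟩ | hroot) | (⟨hj, hba⟩ | ⟨hb, ha, hG⟩)⟩ := h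
  · dsimp only at hj; subst hj; exact Or.inl ⟨j, a, b, rfl, rfl, hab⟩
  · exact Or.inr hroot
  · dsimp only at hj; subst hj; exact Or.inl ⟨j', a, b, rfl, rfl, hba.symm⟩
  · exact Or.inr ⟨ha, hb, hG.symm⟩

variable (G H r) in
def fiberHom (i : ι) : H i →g rootedProdFamily G H r :=
  ⟨fun a => ⟨i, a⟩, adj_fiber⟩

variable (G H r) in
def rootHom : G →g rootedProdFamily G H r :=
  ⟨fun i => ⟨i, r i⟩, adj_root⟩

/-- The lower bound holds because the right-hand side, as a function of `(i, a)`, drops by at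
most one along every edge. -/
lemma dist_root {i k : ι} {a : W i} (ha : (H i).Reachable a (r i)) (hik : G.Reachable i k) :
    (rootedProdFamily G H r).dist ⟨i, a⟩ ⟨k, r k⟩ = (H i).dist a (r i) + G.dist i k := by
  obtain ⟨p, hp⟩ := ha.exists_walk_length_eq_dist
  obtain ⟨q, hq⟩ := hik.exists_walk_length_eq_dist
  let w : (rootedProdFamily G H r).Walk ⟨i, a⟩ ⟨k, r k⟩ :=
    (p.map (fiberHom G H r i)).append (q.map (rootHom G H r))
  have hw : w.length = (H i).dist a (r i) + G.dist i k :=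
    (Walk.length_append _ _).trans <|
      congrArg₂ (· + ·) ((Walk.length_map _ _).trans hp) ((Walk.length_map _ _).trans hq)
  refine le_antisymm (hw ▸ dist_le w) ?_
  let f : (Σ j, W j) → ℕ := fun x => (H x.1).dist x.2 (r x.1) + G.dist x.1 k
  have hf : ∀ ⦃x y⦄, (rootedProdFamily G H r).Adj x y → f x ≤ f y + 1 := by
    intro x y hxy
    rcases adj_cases hxy with ⟨j, c, d, rfl, rfl, hcd⟩ | ⟨hx, hy, hxy⟩
    · have := hcd.dist_le_dist_add_one (r j)
      simp only [f]
      omega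
    · have := hxy.dist_le_dist_add_one k
      simp only [f, hx, hy, SimpleGraph.dist_self]
      omega
  simpa [f] using w.reachable.le_dist_add_of_adj_le hf

lemma rootHom_injective : Function.Injective (rootHom G H r) :=
  fun _ _ h => congrArg Sigma.fst h

lemma isLocalMetricGenerator_image_rootHom (hG : G.Connected) (hH : ∀ i, (H i).Connected)
    (hb : ∀ i, (H i).Colorable 2) {S : Set ι} (hS : IsLocalMetricGenerator G S)
    (hne : S.Nonempty) : IsLocalMetricGenerator (rootedProdFamily G H r) (rootHom G H r '' S) := by
  intro x y hxy
  rcases adj_cases hxy with ⟨j, a, b, rfl, rfl, hab⟩ | ⟨hx, hy, hxy⟩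
  · obtain ⟨k, hk⟩ := hne
    refine ⟨⟨k, r k⟩, ⟨k, hk, rfl⟩, ?_⟩
    rw [dist_root (hH j a (r j)) (hG j k), dist_root (hH j b (r j)) (hG j k)]
    have := (hb j).dist_ne_dist_of_adj hab (hH j a (r j))
    omega
  · obtain ⟨k, hk, hd⟩ := hS hxy
    obtain ⟨i, a⟩ := x
    obtain ⟨j, b⟩ := y
    dsimp only at hx hy
    subst hx hy
    refine ⟨⟨k, r k⟩, ⟨k, hk, rfl⟩, ?_⟩
    rw [dist_root (.refl _) (hG i k), dist_root (.refl _) (hG j k)]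
    simpa using hd

lemma isLocalMetricGenerator_image_fst (hG : G.Connected) (hH : ∀ i, (H i).Connected)
    {T : Set (Σ i, W i)} (hT : IsLocalMetricGenerator (rootedProdFamily G H r) T) :
    IsLocalMetricGenerator G (Sigma.fst '' T) := by
  intro i j hij
  obtain ⟨⟨k, b⟩, hkb, hd⟩ := hT (adj_root (H := H) (r := r) hij)
  refine ⟨k, ⟨_, hkb, rfl⟩, ?_⟩
  have hdist (l : ι) : (rootedProdFamily G H r).dist ⟨l, r l⟩ ⟨k, b⟩ =
      (H k).dist b (r k) + G.dist l k := by
    rw [SimpleGraph.dist_comm, dist_root (hH k b (r k)) (hG k l), SimpleGraph.dist_comm (u := k)]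
  rw [hdist, hdist] at hd
  omega

end rootedProdFamily

section

variable {ι : Type*} {W : ι → Type*} {G : SimpleGraph ι} {H : ∀ i, SimpleGraph (W i)}
  {r : ∀ i, W i} [Fintype ι] [∀ i, Fintype (W i)]

lemma localMetricDim_le_localMetricDim_rootedProdFamily (hG : G.Connected)
    (hH : ∀ i, (H i).Connected) :
    localMetricDim G ≤ localMetricDim (rootedProdFamily G H r) := by
  classical
  obtain ⟨T, hT, hcard⟩ := exists_isLocalMetricBasis (rootedProdFamily G H r)
  calc localMetricDim G
      ≤ (T.image Sigma.fst).card := by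
        refine localMetricDim_le_card ?_
        simpa using rootedProdFamily.isLocalMetricGenerator_image_fst hG hH hT
    _ ≤ T.card := Finset.card_image_le
    _ = _ := hcard

lemma localMetricDim_rootedProdFamily_le_localMetricDim (hG : G.Connected)
    (hH : ∀ i, (H i).Connected) (hb : ∀ i, (H i).Colorable 2) {u v : ι} (huv : G.Adj u v) :
    localMetricDim (rootedProdFamily G H r) ≤ localMetricDim G := by
  classical
  obtain ⟨S, hS, hcard⟩ := exists_isLocalMetricBasis G
  calc localMetricDim (rootedProdFamily G H r)
      ≤ (S.image (rootedProdFamily.rootHom G H r)).card := by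
        refine localMetricDim_le_card ?_
        simpa using
          rootedProdFamily.isLocalMetricGenerator_image_rootHom hG hH hb hS (hS.nonempty huv)
    _ = S.card := Finset.card_image_of_injective _ rootedProdFamily.rootHom_injective
    _ = _ := hcard

end

theorem localMetricDim_rootedProdFamily_bipartite_general {ι : Type*} [Fintype ι]
    {W : ι → Type*} [∀ i, Fintype (W i)] (G : SimpleGraph ι)
    (H : ∀ i, SimpleGraph (W i)) (r : ∀ i, W i) (hG : G.Connected)
    (hn : 2 ≤ Fintype.card ι) (hH : ∀ i, (H i).Connected)
    (hb : ∀ i, (H i).Colorable 2) :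
    localMetricDim (rootedProdFamily G H r) = localMetricDim G := by
  have : Nontrivial ι := Fintype.one_lt_card_iff_nontrivial.mp hn
  obtain ⟨v⟩ := hG.nonempty
  obtain ⟨u, hvu⟩ := hG.preconnected.exists_adj_of_nontrivial v
  exact le_antisymm (localMetricDim_rootedProdFamily_le_localMetricDim hG hH hb hvu)
    (localMetricDim_le_localMetricDim_rootedProdFamily hG hH)

/-- If G is connected of order n ≥ 2 and each Hᵢ is a connected bipartite graph,
then the rooted product satisfies dim_l(G ∘ 𝓗) = dim_l(G). -/
theorem localMetricDim_rootedProdFamily_bipartite {ι : Type*} [Fintype ι]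
    [DecidableEq ι] {W : ι → Type*} [∀ i, Fintype (W i)] (G : SimpleGraph ι)
    (H : ∀ i, SimpleGraph (W i)) (r : ∀ i, W i) (hG : G.Connected)
    (hn : 2 ≤ Fintype.card ι) (hH : ∀ i, (H i).Connected)
    (hb : ∀ i, (H i).Colorable 2) :
    localMetricDim (rootedProdFamily G H r) = localMetricDim G :=
  localMetricDim_rootedProdFamily_bipartite_general G H r hG hn hH hb
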